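/- Let 1 < p < ∞, 1 ≤ q ≤ ∞, and let p', q' be the conjugate exponents (1/p + 1/p' = 1, 1/q + 1/q' = 1). Then pointwise multiplication is bounded from L^{p,q} × L^{p',q'} to L^1: there is a constant C with ‖fg‖_{L^1} ≤ C ‖f‖_{L^{p,q}} ‖g‖_{L^{p',q'}}. -/

import Mathlib

open MeasureTheory ENNReal Set

/-- Decreasing rearrangement of `‖f‖` with respect to `μ`. -/
noncomputable def rearrangement {α : Type*} [MeasurableSpace α] (μ : Measure α)
    {E : Type*} [NNNorm E] (f : α → E) (t : ℝ) : ℝ≥0∞ :=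
  sInf {s : ℝ≥0∞ | μ {x | s < (‖f x‖₊ : ℝ≥0∞)} ≤ ENNReal.ofReal t}

/-- Lorentz quasi-norm `‖f‖_{L^{p,q}(μ)} = ‖ t^{1/p-1/q} f*(t) ‖_{L^q((0,∞),dt)}`. -/
noncomputable def lorentzNorm {α : Type*} [MeasurableSpace α] (μ : Measure α)
    {E : Type*} [NNNorm E] (p q : ℝ≥0∞) (f : α → E) : ℝ≥0∞ :=
  if q = ∞ then
    ⨆ t ∈ Ioi (0 : ℝ), ENNReal.ofReal (t ^ (p.toReal⁻¹)) * rearrangement μ f t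
  else
    (∫⁻ t in Ioi (0 : ℝ),
        (ENNReal.ofReal (t ^ (p.toReal⁻¹ - q.toReal⁻¹)) * rearrangement μ f t) ^ q.toReal) ^
      q.toReal⁻¹

/-!
Hardy–Littlewood: writing `|f(x)| |g(x)|` and `f*(t) g*(t)` as layer-cake double integrals over
levels `(s, u)`, the integrands compare as
`μ({|f| > s} ∩ {|g| > u}) ≤ min(μ{|f| > s}, μ{|g| > u}) = |{t > 0 : f*(t) > s, g*(t) > u}|`,
so `‖fg‖₁ ≤ ∫₀^∞ f* g*`. Since `t^(1/p - 1/q) t^(1/p' - 1/q') = 1`, the right-hand side is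
`∫₀^∞ (t^(1/p - 1/q) f*) (t^(1/p' - 1/q') g*) dt`, and Hölder's inequality with exponents `q, q'`
bounds it by `‖f‖_{L^{p,q}} ‖g‖_{L^{p',q'}}`, so `C = 1` works.
-/

section Rearrangement

variable {α E : Type*} [MeasurableSpace α] {μ : Measure α} [NNNorm E] {f : α → E}

lemma rearrangement_antitone : Antitone (rearrangement μ f) := fun _ _ h =>
  sInf_le_sInf fun _ hs => hs.trans (ENNReal.ofReal_le_ofReal h)

/-- The infimum defining `rearrangement μ f t` is attained. -/
lemma measure_rearrangement_lt_le (t : ℝ) :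
    μ {x | rearrangement μ f t < ‖f x‖₊} ≤ ENNReal.ofReal t := by
  set S := {s : ℝ≥0∞ | μ {x | s < (‖f x‖₊ : ℝ≥0∞)} ≤ ENNReal.ofReal t}
  have hS : ∞ ∈ S := by simp [S]
  obtain ⟨u, hu_anti, hu_lim, hu_mem⟩ := exists_seq_tendsto_sInf ⟨∞, hS⟩ (OrderBot.bddBelow S)
  have hunion : {x | sInf S < (‖f x‖₊ : ℝ≥0∞)} = ⋃ n, {x | u n < (‖f x‖₊ : ℝ≥0∞)} := by
    ext x
    simp only [mem_ofPred_eq, mem_iUnion]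
    exact ⟨fun hx => (hu_lim.eventually (gt_mem_nhds hx)).exists,
      fun ⟨n, hn⟩ => (sInf_le (hu_mem n)).trans_lt hn⟩
  have hmono : Monotone fun n => {x | u n < (‖f x‖₊ : ℝ≥0∞)} :=
    fun m n hmn x hx => (hu_anti hmn).trans_lt hx
  change μ {x | sInf S < (‖f x‖₊ : ℝ≥0∞)} ≤ _
  rw [hunion, hmono.measure_iUnion]
  exact iSup_le hu_mem

lemma rearrangement_le_iff {s : ℝ≥0∞} {t : ℝ} :
    rearrangement μ f t ≤ s ↔ μ {x | s < ‖f x‖₊} ≤ ENNReal.ofReal t :=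
  ⟨fun h => (measure_mono fun _ hx => h.trans_lt hx).trans (measure_rearrangement_lt_le t),
    fun h => sInf_le h⟩

lemma lt_rearrangement_iff {s : ℝ≥0∞} {t : ℝ} :
    s < rearrangement μ f t ↔ ENNReal.ofReal t < μ {x | s < ‖f x‖₊} := by
  simpa only [not_le] using rearrangement_le_iff.not

end Rearrangement

lemma volume_restrict_Ioi_setOf_ofReal_lt (a : ℝ≥0∞) :
    volume.restrict (Ioi (0 : ℝ)) {t | ENNReal.ofReal t < a} = a := by
  rw [Measure.restrict_apply (measurableSet_lt ENNReal.measurable_ofReal measurable_const)]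
  rcases eq_or_ne a ∞ with rfl | ha
  · simp [Real.volume_Ioi]
  · have : {t : ℝ | ENNReal.ofReal t < a} ∩ Ioi 0 = Ioo 0 a.toReal := by
      ext t
      simp only [mem_inter_iff, mem_ofPred_eq, mem_Ioi, mem_Ioo]
      exact ⟨fun ⟨h, ht⟩ => ⟨ht, (ENNReal.ofReal_lt_iff_lt_toReal ht.le ha).mp h⟩,
        fun ⟨ht, h⟩ => ⟨(ENNReal.ofReal_lt_iff_lt_toReal ht.le ha).mpr h, ht⟩⟩
    rw [this, Real.volume_Ioo, sub_zero, ENNReal.ofReal_toReal ha]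

lemma volume_restrict_Ioi_prod_setOf_ofReal_lt (a b : ℝ≥0∞) :
    (volume.restrict (Ioi (0 : ℝ))).prod (volume.restrict (Ioi (0 : ℝ)))
      {z : ℝ × ℝ | ENNReal.ofReal z.1 < a ∧ ENNReal.ofReal z.2 < b} = a * b := by
  rw [show {z : ℝ × ℝ | ENNReal.ofReal z.1 < a ∧ ENNReal.ofReal z.2 < b}
      = {t | ENNReal.ofReal t < a} ×ˢ {t | ENNReal.ofReal t < b} from rfl, Measure.prod_prod,
    volume_restrict_Ioi_setOf_ofReal_lt, volume_restrict_Ioi_setOf_ofReal_lt]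

/-- Layer-cake formula for a product of two functions. -/
theorem lintegral_mul_eq_lintegral_measure_lt {β : Type*} [MeasurableSpace β] (m : Measure β)
    [SFinite m] {c d : β → ℝ≥0∞} (hc : AEMeasurable c m) (hd : AEMeasurable d m) :
    ∫⁻ x, c x * d x ∂m = ∫⁻ z, m {x | ENNReal.ofReal z.1 < c x ∧ ENNReal.ofReal z.2 < d x}
      ∂(volume.restrict (Ioi (0 : ℝ))).prod (volume.restrict (Ioi (0 : ℝ))) := by
  set ρ := (volume.restrict (Ioi (0 : ℝ))).prod (volume.restrict (Ioi (0 : ℝ)))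
  have hae : ∀ᵐ x ∂m, c x = hc.mk c x ∧ d x = hd.mk d x := hc.ae_eq_mk.and hd.ae_eq_mk
  set S := {w : β × (ℝ × ℝ) |
    ENNReal.ofReal w.2.1 < hc.mk c w.1 ∧ ENNReal.ofReal w.2.2 < hd.mk d w.1}
  have hS : MeasurableSet S :=
    (measurableSet_lt (by fun_prop) (hc.measurable_mk.comp measurable_fst)).inter
      (measurableSet_lt (by fun_prop) (hd.measurable_mk.comp measurable_fst))
  calc ∫⁻ x, c x * d x ∂m
      = ∫⁻ x, hc.mk c x * hd.mk d x ∂m :=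
        lintegral_congr_ae (hae.mono fun x hx => by simp only [hx.1, hx.2])
    _ = m.prod ρ S := by
        rw [Measure.prod_apply hS]
        exact lintegral_congr fun x => (volume_restrict_Ioi_prod_setOf_ofReal_lt _ _).symm
    _ = ∫⁻ z, m {x | ENNReal.ofReal z.1 < hc.mk c x ∧ ENNReal.ofReal z.2 < hd.mk d x} ∂ρ :=
        Measure.prod_apply_symm hS
    _ = ∫⁻ z, m {x | ENNReal.ofReal z.1 < c x ∧ ENNReal.ofReal z.2 < d x} ∂ρ := by
        refine lintegral_congr fun z => measure_congr ?_
        filter_upwards [hae] with x hx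
        change (_ ∧ _) = (_ ∧ _)
        rw [hx.1, hx.2]

/-- The Hardy–Littlewood rearrangement inequality. -/
theorem lintegral_nnnorm_mul_le_lintegral_rearrangement_mul {α E F : Type*} [MeasurableSpace α]
    {μ : Measure α} [SFinite μ] [NNNorm E] [NNNorm F] {f : α → E} {g : α → F}
    (hf : AEMeasurable (fun x => (‖f x‖₊ : ℝ≥0∞)) μ)
    (hg : AEMeasurable (fun x => (‖g x‖₊ : ℝ≥0∞)) μ) :
    ∫⁻ x, ‖f x‖₊ * ‖g x‖₊ ∂μ ≤
      ∫⁻ t in Ioi (0 : ℝ), rearrangement μ f t * rearrangement μ g t := by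
  rw [lintegral_mul_eq_lintegral_measure_lt μ hf hg,
    lintegral_mul_eq_lintegral_measure_lt _ rearrangement_antitone.measurable.aemeasurable
      rearrangement_antitone.measurable.aemeasurable]
  refine lintegral_mono fun z => ?_
  simp only [lt_rearrangement_iff, ← lt_min_iff, volume_restrict_Ioi_setOf_ofReal_lt]
  exact le_min (measure_mono fun _ hx => hx.1) (measure_mono fun _ hx => hx.2)

section Holder

variable {α : Type*} [MeasurableSpace α] {μ : Measure α}

lemma lintegral_mul_le_eLpNorm_top_mul_eLpNorm_one {f g : α → ℝ≥0∞} (hg : AEMeasurable g μ) :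
    ∫⁻ x, f x * g x ∂μ ≤ eLpNorm f ∞ μ * eLpNorm g 1 μ := by
  simp_rw [eLpNorm_exponent_top, eLpNorm_one_eq_lintegral_enorm, enorm_eq_self]
  rw [← lintegral_const_mul'' _ hg]
  refine lintegral_mono_ae ((ae_le_eLpNormEssSup (f := f)).mono fun x hx => ?_)
  simpa using mul_le_mul_left hx (g x)

theorem lintegral_mul_le_eLpNorm_mul_eLpNorm {p q : ℝ≥0∞} [p.HolderConjugate q]
    {f g : α → ℝ≥0∞} (hf : AEMeasurable f μ) (hg : AEMeasurable g μ) :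
    ∫⁻ x, f x * g x ∂μ ≤ eLpNorm f p μ * eLpNorm g q μ := by
  rcases eq_or_ne p ∞ with rfl | hp
  · rw [(ENNReal.HolderConjugate.eq_top_iff_eq_one ∞ q).mp rfl]
    exact lintegral_mul_le_eLpNorm_top_mul_eLpNorm_one hg
  rcases eq_or_ne q ∞ with rfl | hq
  · rw [(ENNReal.HolderConjugate.eq_top_iff_eq_one ∞ p).mp rfl, mul_comm]
    simpa only [mul_comm (f _)] using lintegral_mul_le_eLpNorm_top_mul_eLpNorm_one hf
  have hpq' := ENNReal.HolderConjugate.toReal_of_ne_top hp hq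
  rw [eLpNorm_eq_lintegral_rpow_enorm_toReal (ENNReal.HolderConjugate.ne_zero p q) hp,
    eLpNorm_eq_lintegral_rpow_enorm_toReal (ENNReal.HolderConjugate.ne_zero q p) hq]
  simpa only [enorm_eq_self, Pi.mul_apply] using ENNReal.lintegral_mul_le_Lp_mul_Lq μ hpq' hf hg

end Holder

lemma eLpNorm_rpow_mul_rearrangement_le_lorentzNorm {α E : Type*} [MeasurableSpace α]
    (μ : Measure α) [NNNorm E] (p q : ℝ≥0∞) (f : α → E) :
    eLpNorm (fun t => ENNReal.ofReal (t ^ (p.toReal⁻¹ - q.toReal⁻¹)) * rearrangement μ f t) q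
      (volume.restrict (Ioi (0 : ℝ))) ≤ lorentzNorm μ p q f := by
  rcases eq_or_ne q ∞ with rfl | hq
  · rw [lorentzNorm, if_pos rfl, eLpNorm_exponent_top, eLpNormEssSup_eq_essSup_enorm]
    refine essSup_le_of_ae_le _ ?_
    filter_upwards [ae_restrict_mem measurableSet_Ioi] with t ht
    simpa using le_biSup (fun t => ENNReal.ofReal (t ^ p.toReal⁻¹) * rearrangement μ f t) ht
  rcases eq_or_ne q 0 with rfl | hq0
  · simp
  rw [lorentzNorm, if_neg hq, eLpNorm_eq_lintegral_rpow_enorm_toReal hq0 hq]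
  simp only [enorm_eq_self, one_div, le_refl]

lemma ENNReal.toReal_inv_add_toReal_inv_of_inv_add_inv_eq_one {a b : ℝ≥0∞}
    (h : a⁻¹ + b⁻¹ = 1) : a.toReal⁻¹ + b.toReal⁻¹ = 1 := by
  have ha : a⁻¹ ≠ ∞ := ne_top_of_le_ne_top one_ne_top (h ▸ le_self_add)
  have hb : b⁻¹ ≠ ∞ := ne_top_of_le_ne_top one_ne_top (h ▸ le_add_self)
  rw [← toReal_inv, ← toReal_inv, ← toReal_add ha hb, h, toReal_one]

lemma ENNReal.ofReal_rpow_mul_ofReal_rpow_of_add_eq_zero {t a b : ℝ} (ht : 0 < t)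
    (hab : a + b = 0) : ENNReal.ofReal (t ^ a) * ENNReal.ofReal (t ^ b) = 1 := by
  rw [← ENNReal.ofReal_mul (Real.rpow_nonneg ht.le a), ← Real.rpow_add ht, hab, Real.rpow_zero,
    ENNReal.ofReal_one]

theorem lorentzNorm_mul_dual_general {α : Type*} [MeasurableSpace α] (μ : Measure α) [SigmaFinite μ]
    (p q p' q' : ℝ≥0∞)
    (hpc : p⁻¹ + p'⁻¹ = 1) (hqc : q⁻¹ + q'⁻¹ = 1) :
    ∃ C : ℝ≥0∞, C < ∞ ∧ ∀ f g : α → ℝ,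
      AEStronglyMeasurable f μ → AEStronglyMeasurable g μ →
      eLpNorm (fun x => f x * g x) 1 μ ≤ C * lorentzNorm μ p q f * lorentzNorm μ p' q' g := by
  have : q.HolderConjugate q' := ENNReal.holderConjugate_iff.mpr hqc
  have hexp : (p.toReal⁻¹ - q.toReal⁻¹) + (p'.toReal⁻¹ - q'.toReal⁻¹) = 0 := by
    linarith [ENNReal.toReal_inv_add_toReal_inv_of_inv_add_inv_eq_one hpc,
      ENNReal.toReal_inv_add_toReal_inv_of_inv_add_inv_eq_one hqc]
  have hmeas (e : ℝ) (h : α → ℝ) :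
      AEMeasurable (fun t : ℝ => ENNReal.ofReal (t ^ e) * rearrangement μ h t)
        (volume.restrict (Ioi 0)) :=
    (by fun_prop : Measurable fun t : ℝ => ENNReal.ofReal (t ^ e)).aemeasurable.mul
      rearrangement_antitone.measurable.aemeasurable
  refine ⟨1, one_lt_top, fun f g hf hg => ?_⟩
  calc eLpNorm (fun x => f x * g x) 1 μ = ∫⁻ x, ‖f x‖₊ * ‖g x‖₊ ∂μ := by
        simp only [eLpNorm_one_eq_lintegral_enorm, enorm_eq_nnnorm, nnnorm_mul, ENNReal.coe_mul]
    _ ≤ ∫⁻ t in Ioi (0 : ℝ), rearrangement μ f t * rearrangement μ g t :=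
        lintegral_nnnorm_mul_le_lintegral_rearrangement_mul hf.enorm hg.enorm
    _ = ∫⁻ t in Ioi (0 : ℝ),
          (ENNReal.ofReal (t ^ (p.toReal⁻¹ - q.toReal⁻¹)) * rearrangement μ f t) *
            (ENNReal.ofReal (t ^ (p'.toReal⁻¹ - q'.toReal⁻¹)) * rearrangement μ g t) := by
        refine setLIntegral_congr_fun measurableSet_Ioi fun t ht => ?_
        rw [mul_mul_mul_comm, ENNReal.ofReal_rpow_mul_ofReal_rpow_of_add_eq_zero ht hexp, one_mul]
    _ ≤ 1 * lorentzNorm μ p q f * lorentzNorm μ p' q' g := by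
        rw [one_mul]
        exact (lintegral_mul_le_eLpNorm_mul_eLpNorm (hmeas _ f) (hmeas _ g)).trans
          (mul_le_mul' (eLpNorm_rpow_mul_rearrangement_le_lorentzNorm μ p q f)
            (eLpNorm_rpow_mul_rearrangement_le_lorentzNorm μ p' q' g))

/-- pointwise multiplication is bounded from `L^{p,q} × L^{p',q'}` to `L¹`. -/
theorem lorentzNorm_mul_dual {α : Type*} [MeasurableSpace α] (μ : Measure α) [SigmaFinite μ]
    (p q p' q' : ℝ≥0∞) (hp : 1 < p) (hp' : p ≠ ∞) (hq : 1 ≤ q)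
    (hpc : p⁻¹ + p'⁻¹ = 1) (hqc : q⁻¹ + q'⁻¹ = 1) :
    ∃ C : ℝ≥0∞, C < ∞ ∧ ∀ f g : α → ℝ,
      AEStronglyMeasurable f μ → AEStronglyMeasurable g μ →
      eLpNorm (fun x => f x * g x) 1 μ ≤ C * lorentzNorm μ p q f * lorentzNorm μ p' q' g :=
  lorentzNorm_mul_dual_general μ p q p' q' hpc hqc
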